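/- arXiv:2111.13846 — 2 statements merged into one kernel-verified Lean document; each statement's English description precedes it below -/
import Mathlib

section
/- Let δ ∈ (0,1), s > 0, C > 0, t ≥ 0, and let b ≥ 1 be an integer. For p ∈ (0,1] define G_b(t;p) := exp(−(C/p)·δ·∫_{t^(2/δ)}^∞ [1 − (1 − p·s/(v+s))^b] · v^(δ−1)/√(v^δ − t²) dv). Then lim_{p→0⁺} G_b(t;p) = exp(−C·b·δ·s·∫_{t^(2/δ)}^∞ v^(δ−1)/((v+s)·√(v^δ − t²)) dv). -/
open Real MeasureTheory Filter Set

lemma aux_bern (b : ℕ) {x : ℝ} (hx0 : 0 ≤ x) (hx1 : x ≤ 1) :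
    1 - (1 - x) ^ b ≤ b * x := by
  have h := one_add_mul_le_pow (a := -x) (by linarith) b
  have : (1 + -x) = 1 - x := by ring
  rw [this] at h
  nlinarith

lemma aux_bern0 (b : ℕ) {x : ℝ} (hx0 : 0 ≤ x) (hx1 : x ≤ 1) :
    0 ≤ 1 - (1 - x) ^ b := by
  have : (1 - x) ^ b ≤ 1 := pow_le_one₀ (by linarith) (by linarith)
  linarith

lemma aux_concave {δ a v : ℝ} (hδ0 : 0 < δ) (hδ1 : δ < 1) (ha : 0 < a) (hav : a ≤ v) :
    δ * v ^ (δ - 1) * (v - a) ≤ v ^ δ - a ^ δ := by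
  have hv : (0:ℝ) < v := lt_of_lt_of_le ha hav
  have key := rpow_one_add_le_one_add_mul_self (s := a / v - 1)
    (by linarith [div_nonneg ha.le hv.le]) hδ0.le hδ1.le
  rw [add_sub_cancel] at key
  -- (a/v)^δ ≤ 1 + δ*(a/v - 1)
  have hdiv : (a / v) ^ δ = a ^ δ / v ^ δ := Real.div_rpow ha.le hv.le δ
  rw [hdiv] at key
  have hvpos : (0:ℝ) < v ^ δ := Real.rpow_pos_of_pos hv δ
  have hmul := mul_le_mul_of_nonneg_right key hvpos.le
  rw [div_mul_cancel₀ _ (ne_of_gt hvpos)] at hmul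
  have h1 : v ^ (δ - 1) = v ^ δ / v := by
    rw [Real.rpow_sub hv, Real.rpow_one]
  rw [h1]
  have : (1 + δ * (a / v - 1)) * v ^ δ = v ^ δ + δ * (a / v - 1) * v ^ δ := by ring
  rw [this] at hmul
  have h2 : δ * (a / v - 1) * v ^ δ = -(δ * (v ^ δ / v) * (v - a)) := by
    field_simp
    ring
  rw [h2] at hmul
  linarith
open Real MeasureTheory Filter Set

lemma aux_lim (b : ℕ) (c : ℝ) :
    Tendsto (fun p : ℝ => p⁻¹ * (1 - (1 - p * c) ^ b)) (nhdsWithin 0 (Set.Ioi 0))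
      (nhds (b * c)) := by
  have h1 : HasDerivAt (fun p : ℝ => 1 - p * c) (-c) 0 := by
    simpa using ((hasDerivAt_id (0:ℝ)).mul_const c).const_sub 1
  have h2 : HasDerivAt (fun p : ℝ => 1 - (1 - p * c) ^ b) (b * c) 0 := by
    have h3 : HasDerivAt (fun p : ℝ => 1 - (1 - p * c) ^ b) _ 0 := (h1.pow b).const_sub 1
    convert h3 using 1
    simp
  have h4 := hasDerivAt_iff_tendsto_slope.mp h2
  have h5 : Tendsto (slope (fun p : ℝ => 1 - (1 - p * c) ^ b) 0) (nhdsWithin 0 (Set.Ioi 0))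
      (nhds (b * c)) := h4.mono_left (nhdsWithin_mono 0 (fun x hx => ne_of_gt hx))
  refine h5.congr (fun p => ?_)
  simp [slope_def_field, div_eq_inv_mul]
open Real MeasureTheory Filter Set

lemma aux_meas (δ s t : ℝ) :
    Measurable (fun v : ℝ => v ^ (δ - 1) / ((v + s) * Real.sqrt (v ^ δ - t ^ 2))) := by
  fun_prop

lemma aux_sqrt_rpow {v e : ℝ} (hv : 0 ≤ v) : Real.sqrt (v ^ e) = v ^ (e / 2) := by
  rw [Real.sqrt_eq_rpow, ← Real.rpow_mul hv]
  congr 1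
  ring

lemma aux_integrable (δ s t : ℝ) (hδ0 : 0 < δ) (hδ1 : δ < 1) (hs : 0 < s) (ht : 0 ≤ t) :
    IntegrableOn (fun v : ℝ => v ^ (δ - 1) / ((v + s) * Real.sqrt (v ^ δ - t ^ 2)))
      (Set.Ioi (t ^ (2 / δ))) := by
  set a := t ^ (2 / δ) with ha_def
  have ha0 : 0 ≤ a := Real.rpow_nonneg ht _
  have hat : a ^ δ = t ^ 2 := by
    rw [ha_def, ← Real.rpow_natCast t 2, ← Real.rpow_mul ht]
    congr 1
    field_simp
    norm_num
  set m := max 1 (2 * a) with hm_def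
  have hm1 : (1:ℝ) ≤ m := le_max_left _ _
  have hm2 : 2 * a ≤ m := le_max_right _ _
  have hm0 : (0:ℝ) < m := lt_of_lt_of_le one_pos hm1
  have ham : a ≤ m := le_trans (by linarith) hm2
  have hK : 0 < 1 - (2:ℝ) ^ (-δ) := by
    have h2 : (1:ℝ) < 2 ^ δ := Real.one_lt_rpow_iff_of_pos (by norm_num) |>.mpr (Or.inl ⟨one_lt_two, hδ0⟩)
    have : (2:ℝ) ^ (-δ) < 1 := by
      rw [Real.rpow_neg (by norm_num : (0:ℝ) ≤ 2)]
      exact inv_lt_one_of_one_lt₀ h2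
    linarith
  have hmeas := (aux_meas δ s t).aestronglyMeasurable (μ := volume)
  rw [← Set.Ioc_union_Ioi_eq_Ioi ham]
  apply IntegrableOn.union
  · -- near piece, Ioc a m
    rcases eq_or_lt_of_le ht with ht0 | htpos
    · -- t = 0, a = 0
      have ha_eq : a = 0 := by
        rw [ha_def, ← ht0, Real.zero_rpow (by positivity : 2 / δ ≠ 0)]
      rw [ha_eq]
      have hbound : IntegrableOn (fun v : ℝ => s⁻¹ * v ^ (δ / 2 - 1)) (Ioc (0:ℝ) m) := by
        have h := intervalIntegral.intervalIntegrable_rpow' (a := 0) (b := m) (r := δ / 2 - 1)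
          (by linarith)
        rw [intervalIntegrable_iff_integrableOn_Ioc_of_le hm0.le] at h
        exact h.const_mul _
      refine Integrable.mono' hbound hmeas.restrict ?_
      filter_upwards [ae_restrict_mem measurableSet_Ioc] with v hv
      have hv0 : (0:ℝ) < v := hv.1
      have ht2 : t ^ 2 = 0 := by rw [← ht0]; ring
      rw [Real.norm_eq_abs, abs_of_nonneg (by positivity), ht2, sub_zero, aux_sqrt_rpow hv0.le]
      calc v ^ (δ - 1) / ((v + s) * v ^ (δ / 2))
          ≤ v ^ (δ - 1) / (s * v ^ (δ / 2)) := by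
            apply div_le_div_of_nonneg_left (by positivity) (by positivity)
            have := Real.rpow_pos_of_pos hv0 (δ / 2)
            nlinarith
        _ = s⁻¹ * (v ^ (δ - 1) / v ^ (δ / 2)) := by
            rw [div_mul_eq_div_div_swap]
            ring
        _ = s⁻¹ * v ^ (δ / 2 - 1) := by
            rw [← Real.rpow_sub hv0]
            congr 1
            ring
    · have hapos : 0 < a := Real.rpow_pos_of_pos htpos _
      have hbound : IntegrableOn
          (fun v : ℝ => (a ^ (δ - 1) / (s * Real.sqrt (δ * m ^ (δ - 1)))) * (v - a) ^ (-(1:ℝ)/2))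
          (Ioc a m) := by
        have h := intervalIntegral.intervalIntegrable_rpow' (a := 0) (b := m - a)
          (r := -(1:ℝ)/2) (by norm_num)
        have h2 := h.comp_sub_right a
        simp only [zero_add, sub_add_cancel] at h2
        rw [intervalIntegrable_iff_integrableOn_Ioc_of_le ham] at h2
        exact h2.const_mul _
      refine Integrable.mono' hbound hmeas.restrict ?_
      filter_upwards [ae_restrict_mem measurableSet_Ioc] with v hv
      have hva : a < v := hv.1
      have hv0 : 0 < v := lt_trans hapos hva
      have hnum : v ^ (δ - 1) ≤ a ^ (δ - 1) :=
        Real.rpow_le_rpow_of_nonpos hapos hva.le (by linarith)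
      have hconc := aux_concave hδ0 hδ1 hapos hva.le
      have hmono : m ^ (δ - 1) ≤ v ^ (δ - 1) :=
        Real.rpow_le_rpow_of_nonpos hv0 hv.2 (by linarith)
      have hmpos : 0 < δ * m ^ (δ - 1) := by
        have := Real.rpow_pos_of_pos hm0 (δ - 1)
        positivity
      have hlow : δ * m ^ (δ - 1) * (v - a) ≤ v ^ δ - t ^ 2 := by
        rw [← hat]
        have h9 := mul_le_mul_of_nonneg_right
          (mul_le_mul_of_nonneg_left hmono hδ0.le) (sub_nonneg.mpr hva.le)
        linarith
      have hsqrt : Real.sqrt (δ * m ^ (δ - 1)) * Real.sqrt (v - a) ≤ Real.sqrt (v ^ δ - t ^ 2) := by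
        rw [← Real.sqrt_mul hmpos.le]
        exact Real.sqrt_le_sqrt hlow
      have hsa : 0 < Real.sqrt (v - a) := Real.sqrt_pos.mpr (by linarith)
      have hsm : 0 < Real.sqrt (δ * m ^ (δ - 1)) := Real.sqrt_pos.mpr hmpos
      rw [Real.norm_eq_abs, abs_of_nonneg (by positivity)]
      have hden : s * Real.sqrt (δ * m ^ (δ - 1)) * Real.sqrt (v - a)
          ≤ (v + s) * Real.sqrt (v ^ δ - t ^ 2) := by
        calc s * Real.sqrt (δ * m ^ (δ - 1)) * Real.sqrt (v - a)
            = s * (Real.sqrt (δ * m ^ (δ - 1)) * Real.sqrt (v - a)) := by ring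
          _ ≤ (v + s) * Real.sqrt (v ^ δ - t ^ 2) :=
              mul_le_mul (by linarith) hsqrt (by positivity) (by linarith)
      calc v ^ (δ - 1) / ((v + s) * Real.sqrt (v ^ δ - t ^ 2))
          ≤ a ^ (δ - 1) / (s * Real.sqrt (δ * m ^ (δ - 1)) * Real.sqrt (v - a)) :=
            div_le_div₀ (by positivity) hnum (by positivity) hden
        _ = (a ^ (δ - 1) / (s * Real.sqrt (δ * m ^ (δ - 1)))) * (v - a) ^ (-(1:ℝ)/2) := by
            rw [show (-(1:ℝ)/2) = -(1/2) by ring,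
              Real.rpow_neg (by linarith : (0:ℝ) ≤ v - a), ← Real.sqrt_eq_rpow]
            rw [div_mul_eq_div_div_swap]
            ring
  · -- tail piece, Ioi m
    have hbound : IntegrableOn
        (fun v : ℝ => (Real.sqrt (1 - 2 ^ (-δ)))⁻¹ * v ^ (δ / 2 - 2)) (Ioi m) := by
      exact (integrableOn_Ioi_rpow_of_lt (by linarith) hm0).const_mul _
    refine Integrable.mono' hbound (hmeas.restrict) ?_
    filter_upwards [ae_restrict_mem measurableSet_Ioi] with v hv
    have hv1 : (1:ℝ) ≤ v := le_trans hm1 (le_of_lt hv)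
    have hv0 : (0:ℝ) < v := lt_of_lt_of_le one_pos hv1
    have hva : 2 * a ≤ v := le_trans hm2 (le_of_lt hv)
    have ht2 : t ^ 2 ≤ 2 ^ (-δ) * v ^ δ := by
      rw [← hat]
      calc a ^ δ ≤ (v / 2) ^ δ := Real.rpow_le_rpow ha0 (by linarith) hδ0.le
        _ = v ^ δ / 2 ^ δ := Real.div_rpow hv0.le (by norm_num) δ
        _ = 2 ^ (-δ) * v ^ δ := by
            rw [Real.rpow_neg (by norm_num : (0:ℝ) ≤ 2)]
            ring
    have hvd : 0 < v ^ δ := Real.rpow_pos_of_pos hv0 δ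
    have hBlow : Real.sqrt (1 - 2 ^ (-δ)) * v ^ (δ / 2) ≤ Real.sqrt (v ^ δ - t ^ 2) := by
      have h1 : (1 - 2 ^ (-δ)) * v ^ δ ≤ v ^ δ - t ^ 2 := by nlinarith
      calc Real.sqrt (1 - 2 ^ (-δ)) * v ^ (δ / 2)
          = Real.sqrt ((1 - 2 ^ (-δ)) * v ^ δ) := by
            rw [Real.sqrt_mul hK.le, aux_sqrt_rpow hv0.le]
        _ ≤ _ := Real.sqrt_le_sqrt h1
    have hden : Real.sqrt (1 - 2 ^ (-δ)) * v ^ (1 + δ / 2) ≤ (v + s) * Real.sqrt (v ^ δ - t ^ 2) := by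
      have : Real.sqrt (1 - 2 ^ (-δ)) * v ^ (1 + δ / 2) = v * (Real.sqrt (1 - 2 ^ (-δ)) * v ^ (δ / 2)) := by
        rw [Real.rpow_add hv0, Real.rpow_one]; ring
      rw [this]
      apply mul_le_mul (by linarith) hBlow (by positivity) (by linarith)
    have hKs : 0 < Real.sqrt (1 - 2 ^ (-δ)) := Real.sqrt_pos.mpr hK
    rw [Real.norm_eq_abs, abs_of_nonneg (by positivity)]
    calc v ^ (δ - 1) / ((v + s) * Real.sqrt (v ^ δ - t ^ 2))
        ≤ v ^ (δ - 1) / (Real.sqrt (1 - 2 ^ (-δ)) * v ^ (1 + δ / 2)) := by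
          apply div_le_div_of_nonneg_left (by positivity) (by positivity) hden
      _ = (Real.sqrt (1 - 2 ^ (-δ)))⁻¹ * (v ^ (δ - 1) / v ^ (1 + δ / 2)) := by
          rw [div_mul_eq_div_div_swap]
          ring
      _ = (Real.sqrt (1 - 2 ^ (-δ)))⁻¹ * v ^ (δ / 2 - 2) := by
          rw [← Real.rpow_sub hv0]
          congr 1
          ring

theorem stmt12 (δ s C t : ℝ) (b : ℕ) (hδ0 : 0 < δ) (hδ1 : δ < 1) (hs : 0 < s)
    (hC : 0 < C) (ht : 0 ≤ t) (hb : 1 ≤ b) :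
    Tendsto (fun p : ℝ =>
        Real.exp (-((C / p) * δ * ∫ v in Set.Ioi (t ^ (2 / δ)),
          (1 - (1 - p * s / (v + s)) ^ b) * v ^ (δ - 1) / Real.sqrt (v ^ δ - t ^ 2))))
      (nhdsWithin 0 (Set.Ioi 0))
      (nhds (Real.exp (-(C * (b : ℝ) * δ * s * ∫ v in Set.Ioi (t ^ (2 / δ)),
          v ^ (δ - 1) / ((v + s) * Real.sqrt (v ^ δ - t ^ 2)))))) := by
  set a := t ^ (2 / δ) with ha_def
  have ha0 : 0 ≤ a := Real.rpow_nonneg ht _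
  have hat : a ^ δ = t ^ 2 := by
    rw [ha_def, ← Real.rpow_natCast t 2, ← Real.rpow_mul ht]
    congr 1
    field_simp
    norm_num
  have hInt := aux_integrable δ s t hδ0 hδ1 hs ht
  rw [← ha_def] at hInt
  have hmemIoo : Set.Ioo (0:ℝ) 1 ∈ nhdsWithin (0:ℝ) (Set.Ioi 0) :=
    Ioo_mem_nhdsGT_of_mem ⟨le_refl 0, one_pos⟩
  have hDCT : Tendsto (fun p : ℝ => ∫ v in Set.Ioi a,
      p⁻¹ * ((1 - (1 - p * s / (v + s)) ^ b) * v ^ (δ - 1) / Real.sqrt (v ^ δ - t ^ 2)))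
      (nhdsWithin 0 (Set.Ioi 0))
      (nhds (∫ v in Set.Ioi a,
        ((b : ℝ) * s) * (v ^ (δ - 1) / ((v + s) * Real.sqrt (v ^ δ - t ^ 2))))) := by
    apply tendsto_integral_filter_of_dominated_convergence
      (bound := fun v => ((b : ℝ) * s) * (v ^ (δ - 1) / ((v + s) * Real.sqrt (v ^ δ - t ^ 2))))
    · apply Eventually.of_forall
      intro p
      apply Measurable.aestronglyMeasurable
      fun_prop
    · filter_upwards [hmemIoo] with p hp
      filter_upwards [ae_restrict_mem measurableSet_Ioi] with v hv
      have hv0 : (0:ℝ) < v := lt_of_le_of_lt ha0 hv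
      have hvs : (0:ℝ) < v + s := by linarith
      have hx0 : 0 ≤ p * s / (v + s) := le_of_lt (div_pos (mul_pos hp.1 hs) hvs)
      have hx1 : p * s / (v + s) ≤ 1 := by
        rw [div_le_one hvs]
        nlinarith [hp.1, hp.2]
      have hB : 0 < Real.sqrt (v ^ δ - t ^ 2) := by
        apply Real.sqrt_pos.mpr
        have := Real.rpow_lt_rpow ha0 hv hδ0
        rw [hat] at this
        linarith
      have hnn : 0 ≤ p⁻¹ * ((1 - (1 - p * s / (v + s)) ^ b) * v ^ (δ - 1) /
          Real.sqrt (v ^ δ - t ^ 2)) := by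
        apply mul_nonneg (inv_nonneg.mpr hp.1.le)
        apply div_nonneg (mul_nonneg (aux_bern0 b hx0 hx1) (Real.rpow_nonneg hv0.le _)) hB.le
      rw [Real.norm_eq_abs, abs_of_nonneg hnn]
      have h1 : 1 - (1 - p * s / (v + s)) ^ b ≤ b * (p * s / (v + s)) := aux_bern b hx0 hx1
      have h2 : p⁻¹ * ((1 - (1 - p * s / (v + s)) ^ b) * v ^ (δ - 1) /
            Real.sqrt (v ^ δ - t ^ 2))
          ≤ p⁻¹ * ((b * (p * s / (v + s))) * v ^ (δ - 1) / Real.sqrt (v ^ δ - t ^ 2)) := by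
        apply mul_le_mul_of_nonneg_left _ (inv_nonneg.mpr hp.1.le)
        apply div_le_div_of_nonneg_right _ hB.le
        exact mul_le_mul_of_nonneg_right h1 (Real.rpow_nonneg hv0.le _)
      refine h2.trans (le_of_eq ?_)
      field_simp [hp.1.ne', hvs.ne', hB.ne']
    · exact hInt.const_mul _
    · filter_upwards [ae_restrict_mem measurableSet_Ioi] with v hv
      have hv0 : (0:ℝ) < v := lt_of_le_of_lt ha0 hv
      have hvs : (0:ℝ) < v + s := by linarith
      have hB : 0 < Real.sqrt (v ^ δ - t ^ 2) := by
        apply Real.sqrt_pos.mpr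
        have := Real.rpow_lt_rpow ha0 hv hδ0
        rw [hat] at this
        linarith
      have h3 := (aux_lim b (s / (v + s))).mul_const
        (v ^ (δ - 1) / Real.sqrt (v ^ δ - t ^ 2))
      have hval : (b * (s / (v + s))) * (v ^ (δ - 1) / Real.sqrt (v ^ δ - t ^ 2))
          = ((b : ℝ) * s) * (v ^ (δ - 1) / ((v + s) * Real.sqrt (v ^ δ - t ^ 2))) := by
        field_simp
      rw [hval] at h3
      refine h3.congr (fun p => ?_)
      rw [show p * (s / (v + s)) = p * s / (v + s) by ring]
      ring
  have h2 := hDCT.const_mul (C * δ)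
  have hlimeq : C * (b : ℝ) * δ * s * (∫ v in Set.Ioi a,
        v ^ (δ - 1) / ((v + s) * Real.sqrt (v ^ δ - t ^ 2)))
      = (C * δ) * ∫ v in Set.Ioi a,
        ((b : ℝ) * s) * (v ^ (δ - 1) / ((v + s) * Real.sqrt (v ^ δ - t ^ 2))) := by
    rw [integral_const_mul]
    ring
  have hmain : Tendsto (fun p : ℝ => (C / p) * δ * ∫ v in Set.Ioi a,
      (1 - (1 - p * s / (v + s)) ^ b) * v ^ (δ - 1) / Real.sqrt (v ^ δ - t ^ 2))
      (nhdsWithin 0 (Set.Ioi 0))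
      (nhds (C * (b : ℝ) * δ * s * ∫ v in Set.Ioi a,
        v ^ (δ - 1) / ((v + s) * Real.sqrt (v ^ δ - t ^ 2)))) := by
    rw [hlimeq]
    refine h2.congr' ?_
    filter_upwards [hmemIoo] with p hp
    rw [integral_const_mul]
    ring
  exact (Real.continuous_exp.tendsto _).comp hmain.neg
end

section
/- Let α > 2, δ := 2/α, D > 0, λ > 0, μ > 0, p ∈ (0,1], m ∈ {2,4}, and set κ_q := Γ(1+q)·Γ(1−q). Define p_m^T(θ) := exp(−m·λ·p·D·θ^(δ/2)·κ_{δ/2} − π·λ·p·μ·D²·θ^δ·κ_δ) for θ > 0. Then lim_{θ→0⁺} (1 − p_m^T(θ)) / (m·λ·p·D·κ_{δ/2}·θ^(δ/2)) = 1. -/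
open Real Filter

/-- `κ_q := Γ(1+q)·Γ(1−q)`. -/
noncomputable def kappa (q : ℝ) : ℝ := Real.Gamma (1 + q) * Real.Gamma (1 - q)

/-- The TPPP success probability of the typical vehicle of order `m`
(equation (17) of the paper). -/
noncomputable def pmT (α D lam mu p m θ : ℝ) : ℝ :=
  Real.exp (-(m * lam * p * D * θ ^ ((2 / α) / 2) * kappa ((2 / α) / 2)) -
    π * lam * p * mu * D ^ 2 * θ ^ (2 / α) * kappa (2 / α))

lemma kappa_pos {q : ℝ} (h0 : 0 < q) (h1 : q < 1) : 0 < kappa q :=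
  mul_pos (Real.Gamma_pos_of_pos (by linarith)) (Real.Gamma_pos_of_pos (by linarith))

lemma expE_tendsto : Tendsto (fun x : ℝ => (1 - Real.exp (-x)) / x) (nhdsWithin 0 {(0:ℝ)}ᶜ) (nhds 1) := by
  have h1 : Tendsto (fun x : ℝ => (Real.exp x - 1) / x) (nhdsWithin 0 {(0:ℝ)}ᶜ) (nhds 1) := by
    have h := Real.hasDerivAt_exp 0
    rw [hasDerivAt_iff_tendsto_slope] at h
    simpa [slope_fun_def, Real.exp_zero, div_eq_inv_mul] using h
  have hneg : Tendsto (fun x : ℝ => -x) (nhdsWithin 0 {(0:ℝ)}ᶜ) (nhdsWithin 0 {(0:ℝ)}ᶜ) := by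
    refine tendsto_nhdsWithin_of_tendsto_nhds_of_eventually_within _ ?_ ?_
    · simpa using ((continuous_neg.tendsto (0:ℝ)).mono_left nhdsWithin_le_nhds)
    · filter_upwards [self_mem_nhdsWithin] with x hx
      simpa using hx
  have h2 := h1.comp hneg
  refine h2.congr fun x => ?_
  simp only [Function.comp]
  rw [div_neg, ← neg_div, neg_sub]

lemma aux_tendsto (c1 c2 : ℝ) (hc1 : 0 < c1) (hc2 : 0 < c2) :
    Tendsto (fun x : ℝ => (1 - Real.exp (-(c1 * x) - c2 * x ^ 2)) / (c1 * x))
      (nhdsWithin 0 (Set.Ioi 0)) (nhds 1) := by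
  have hg : Tendsto (fun x : ℝ => c1 * x + c2 * x ^ 2)
      (nhdsWithin 0 (Set.Ioi 0)) (nhdsWithin 0 {(0:ℝ)}ᶜ) := by
    refine tendsto_nhdsWithin_of_tendsto_nhds_of_eventually_within _ ?_ ?_
    · have h : Tendsto (fun x : ℝ => c1 * x + c2 * x ^ 2) (nhds 0)
          (nhds (c1 * 0 + c2 * 0 ^ 2)) := Continuous.tendsto (by continuity) 0
      simpa using h.mono_left nhdsWithin_le_nhds
    · filter_upwards [self_mem_nhdsWithin] with x hx
      have hx0 : 0 < x := hx
      have hpos : 0 < c1 * x + c2 * x ^ 2 := by positivity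
      simpa using ne_of_gt hpos
  have hEg := expE_tendsto.comp hg
  have h3 : Tendsto (fun x : ℝ => 1 + c2 / c1 * x) (nhdsWithin 0 (Set.Ioi 0)) (nhds 1) := by
    have h : Tendsto (fun x : ℝ => 1 + c2 / c1 * x) (nhds 0) (nhds (1 + c2 / c1 * 0)) :=
      Continuous.tendsto (by continuity) 0
    simpa using h.mono_left nhdsWithin_le_nhds
  have hmul := hEg.mul h3
  rw [mul_one] at hmul
  refine hmul.congr' ?_
  filter_upwards [self_mem_nhdsWithin] with x hx
  have hx0 : 0 < x := hx
  have hg0 : 0 < c1 * x + c2 * x ^ 2 := by positivity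
  simp only [Function.comp]
  rw [show -(c1 * x) - c2 * x ^ 2 = -(c1 * x + c2 * x ^ 2) by ring]
  field_simp

theorem stmt15 (α D lam mu p m : ℝ) (hα : 2 < α) (hD : 0 < D) (hlam : 0 < lam)
    (hmu : 0 < mu) (hp0 : 0 < p) (hp1 : p ≤ 1) (hm : m = 2 ∨ m = 4)
    (δ : ℝ) (hδ : δ = 2 / α) :
    Tendsto (fun θ : ℝ =>
        (1 - pmT α D lam mu p m θ) / (m * lam * p * D * kappa (δ / 2) * θ ^ (δ / 2)))
      (nhdsWithin 0 (Set.Ioi 0)) (nhds 1) := by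
  subst hδ
  have hα0 : (0:ℝ) < α := by linarith
  have hq0 : (0:ℝ) < 2 / α / 2 := by positivity
  have hq1 : 2 / α / 2 < 1 := by
    rw [div_div, div_lt_one (by positivity)]
    linarith
  have hd1 : 2 / α < 1 := by
    rw [div_lt_one hα0]; exact hα
  have hm0 : (0:ℝ) < m := by rcases hm with h | h <;> rw [h] <;> norm_num
  have hk1 : 0 < kappa (2 / α / 2) := kappa_pos hq0 hq1
  have hk2 : 0 < kappa (2 / α) := kappa_pos (by positivity) hd1
  have hc1 : 0 < m * lam * p * D * kappa (2 / α / 2) :=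
    mul_pos (mul_pos (mul_pos (mul_pos hm0 hlam) hp0) hD) hk1
  have hc2 : 0 < π * lam * p * mu * D ^ 2 * kappa (2 / α) :=
    mul_pos (mul_pos (mul_pos (mul_pos (mul_pos Real.pi_pos hlam) hp0) hmu)
      (by positivity)) hk2
  have hrpow : Tendsto (fun θ : ℝ => θ ^ (2 / α / 2))
      (nhdsWithin 0 (Set.Ioi 0)) (nhdsWithin 0 (Set.Ioi 0)) := by
    refine tendsto_nhdsWithin_of_tendsto_nhds_of_eventually_within _ ?_ ?_
    · have h := (Real.continuousAt_rpow_const 0 (2 / α / 2) (Or.inr hq0.le)).tendsto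
      rw [Real.zero_rpow (ne_of_gt hq0)] at h
      exact h.mono_left nhdsWithin_le_nhds
    · filter_upwards [self_mem_nhdsWithin] with θ hθ
      exact Set.mem_Ioi.mpr (Real.rpow_pos_of_pos hθ _)
  have hmain := (aux_tendsto _ _ hc1 hc2).comp hrpow
  refine hmain.congr' ?_
  filter_upwards [self_mem_nhdsWithin] with θ hθ
  have hθ0 : (0:ℝ) < θ := hθ
  simp only [Function.comp, pmT]
  rw [show ((θ:ℝ) ^ (2 / α / 2)) ^ 2 = θ ^ (2 / α) by
    rw [sq, ← Real.rpow_add hθ0]; congr 1; ring]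
  ring_nf
end
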